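/- arXiv:1301.0948 — 2 statements merged into one kernel-verified Lean document; each statement's English description precedes it below -/
import Mathlib

section
/- Let 𝒫 be a set of primes such that ∑_{p∈𝒫} p⁻¹ ≤ 1 + (1 − ∑_{p∈𝒫} p⁻²)^{1/2}. Suppose 𝒫 is nonempty. Then the chain of strict inequalities ∑_{p∈𝒫} 1/(p log p) > ∑_{n∈ℕ₂(𝒫)} 1/(n log n) > ∑_{n∈ℕ₃(𝒫)} 1/(n log n) > ⋯ holds; that is, for every natural number k ≥ 1, ∑_{n∈ℕ_k(𝒫)} 1/(n log n) > ∑_{n∈ℕ_{k+1}(𝒫)} 1/(n log n). -/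
/-- A nonempty set of natural numbers is *primitive* if no element of the set divides
another element of the set; the singleton set `{1}` is not considered primitive. -/
def Primitive (S : Set ℕ) : Prop :=
  S.Nonempty ∧ S ≠ {1} ∧ ∀ a ∈ S, ∀ b ∈ S, a ∣ b → a = b

/-- `NSet P` is the set `ℕ(P)` of natural numbers all of whose prime factors lie in `P`
(the multiplicative semigroup generated by `P`, which contains `1`). -/
def NSet (P : Set ℕ) : Set ℕ :=
  {n : ℕ | 0 < n ∧ ∀ p : ℕ, p.Prime → p ∣ n → p ∈ P}

/-- `NkSet P k = ℕ_k(P)`: the elements of `ℕ(P)` with exactly `k` prime factors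
counted with multiplicity. -/
def NkSet (P : Set ℕ) (k : ℕ) : Set ℕ :=
  {n ∈ NSet P | n.primeFactorsList.length = k}

/-- `NgeSet P k = ℕ_{≥k}(P)`: the elements of `ℕ(P)` with at least `k` prime factors
counted with multiplicity. -/
def NgeSet (P : Set ℕ) (k : ℕ) : Set ℕ :=
  {n ∈ NSet P | k ≤ n.primeFactorsList.length}

/-!
For `s > 1` put `S_k(s) = ∑_{n ∈ ℕ_k(P)} n⁻ˢ` (written `𝒮[P, k] s` below). Then
`∑_{n ∈ ℕ_k(P)} 1 / (n log n) = ∫_1^∞ S_k(s) ds`, so it suffices to show `S_{k+1}(s) < S_k(s)`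
for every `s > 1`. Comparing Dirichlet coefficients gives `S_{k+1} S_1 ≤ S_k S_2` (an `n` with
`Ω n ≥ 3` has at least as many divisors `e` with `Ω e = 2` as prime divisors) and
`2 S_2(s) ≤ S_1(s)² + S_1(2s)`. For `x = S_1(s) < ∑ p⁻¹` and `y = S_1(2s) ≤ ∑ p⁻²` the
hypothesis on `P` gives `x² + y < 2x` (if `x > 1`, then `(x - 1)² < 1 - ∑ p⁻² ≤ 1 - y`), hence
`S_2 < S_1`, and so `S_{k+1} S_1 ≤ S_k S_2 < S_k S_1`. The series are taken in `ℝ≥0∞`, where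
products and integrals of series can be rearranged freely.
-/

open scoped ENNReal ArithmeticFunction.Omega Finset
open MeasureTheory Set ArithmeticFunction

lemma ofReal_natCast_mul_rpow (d e : ℕ) (s : ℝ) :
    ENNReal.ofReal (((d * e : ℕ) : ℝ) ^ s) =
      ENNReal.ofReal ((d : ℝ) ^ s) * ENNReal.ofReal ((e : ℝ) ^ s) := by
  rw [Nat.cast_mul, Real.mul_rpow d.cast_nonneg e.cast_nonneg,
    ENNReal.ofReal_mul (by positivity)]

namespace ArithmeticFunction

noncomputable def indicatorFn (S : Set ℕ) : ArithmeticFunction ℝ≥0∞ :=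
  ⟨(S \ {0}).indicator 1, by simp⟩

section indicatorFn

variable {S : Set ℕ} {n : ℕ}

lemma indicatorFn_apply_of_mem (hn : n ∈ S) (h0 : n ≠ 0) : indicatorFn S n = 1 :=
  indicator_of_mem (show n ∈ S \ {0} from ⟨hn, h0⟩) 1

lemma indicatorFn_apply_of_notMem (hn : n ∉ S) : indicatorFn S n = 0 :=
  indicator_of_notMem (fun h => hn h.1) 1

lemma tsum_indicatorFn_mul (h0 : 0 ∉ S) (g : ℕ → ℝ≥0∞) :
    ∑' n, indicatorFn S n * g n = ∑' n : S, g n := by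
  rw [tsum_subtype S g]
  congr 1 with n
  by_cases hn : n ∈ S
  · rw [indicatorFn_apply_of_mem hn (ne_of_mem_of_not_mem hn h0), one_mul, indicator_of_mem hn]
  · rw [indicatorFn_apply_of_notMem hn, zero_mul, indicator_of_notMem hn]

end indicatorFn

noncomputable def dirichletSeries (f : ArithmeticFunction ℝ≥0∞) (s : ℝ) : ℝ≥0∞ :=
  ∑' n, f n * ENNReal.ofReal ((n : ℝ) ^ (-s))

section dirichletSeries

variable {f g : ArithmeticFunction ℝ≥0∞}

lemma dirichletSeries_mono (h : ∀ n, f n ≤ g n) (s : ℝ) :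
    dirichletSeries f s ≤ dirichletSeries g s :=
  ENNReal.tsum_le_tsum fun n => mul_le_mul_left (h n) _

lemma const_mul_dirichletSeries_le {c : ℝ≥0∞} (h : ∀ n, c * f n ≤ g n) (s : ℝ) :
    c * dirichletSeries f s ≤ dirichletSeries g s := by
  rw [dirichletSeries, ← ENNReal.tsum_mul_left]
  exact ENNReal.tsum_le_tsum fun n => by rw [← mul_assoc]; exact mul_le_mul_left (h n) _

lemma dirichletSeries_add (f g : ArithmeticFunction ℝ≥0∞) (s : ℝ) :
    dirichletSeries (f + g) s = dirichletSeries f s + dirichletSeries g s := by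
  simp only [dirichletSeries, add_apply, add_mul, ENNReal.tsum_add]

lemma dirichletSeries_mul (f g : ArithmeticFunction ℝ≥0∞) (s : ℝ) :
    dirichletSeries (f * g) s = dirichletSeries f s * dirichletSeries g s := by
  set w : ℕ → ℝ≥0∞ := fun n => ENNReal.ofReal ((n : ℝ) ^ (-s))
  have hprod : dirichletSeries f s * dirichletSeries g s =
      ∑' p : ℕ × ℕ, f p.1 * g p.2 * w (p.1 * p.2) := by
    rw [dirichletSeries, dirichletSeries, ← ENNReal.tsum_mul_right]
    simp_rw [← ENNReal.tsum_mul_left]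
    rw [← ENNReal.tsum_prod]
    congr 1 with p
    simp only [w, ofReal_natCast_mul_rpow]
    ring
  rw [hprod, ← ENNReal.tsum_fiberwise _ fun p : ℕ × ℕ => p.1 * p.2, dirichletSeries]
  congr 1 with n
  rcases eq_or_ne n 0 with rfl | hn
  · -- the fiber over `0` is infinite, but each of its terms has a factor `f 0` or `g 0`
    refine (by simp : _ = (0 : ℝ≥0∞)).trans (ENNReal.tsum_eq_zero.mpr fun p => ?_).symm
    obtain ⟨⟨d, e⟩, hde⟩ := p
    rcases mul_eq_zero.mp hde with rfl | rfl <;> simp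
  · have hfiber : (fun p : ℕ × ℕ => p.1 * p.2) ⁻¹' {n} = n.divisorsAntidiagonal := by
      ext; simp [hn]
    rw [hfiber, Finset.tsum_subtype' n.divisorsAntidiagonal fun p => f p.1 * g p.2 * w (p.1 * p.2),
      mul_apply, Finset.sum_mul]
    refine Finset.sum_congr rfl fun p hp => ?_
    rw [(Nat.mem_divisorsAntidiagonal.mp hp).1]

lemma measurable_dirichletSeries (f : ArithmeticFunction ℝ≥0∞) :
    Measurable (dirichletSeries f) :=
  Measurable.tsum fun n => by fun_prop

lemma lintegral_ofReal_natCast_rpow_neg {n : ℕ} (hn : 2 ≤ n) :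
    ∫⁻ s in Ioi (1 : ℝ), ENNReal.ofReal ((n : ℝ) ^ (-s)) =
      ENNReal.ofReal (1 / (n * Real.log n)) := by
  have hn0 : (0 : ℝ) < n := by positivity
  have hlog : 0 < Real.log n := Real.log_pos (by exact_mod_cast hn)
  have hexp : ∀ s : ℝ, (n : ℝ) ^ (-s) = Real.exp (-Real.log n * s) := fun s => by
    rw [Real.rpow_def_of_pos hn0]; ring_nf
  simp_rw [hexp]
  rw [← ofReal_integral_eq_lintegral_ofReal (integrableOn_exp_mul_Ioi (by linarith) 1)
    (ae_of_all _ fun s => (Real.exp_pos _).le), integral_exp_mul_Ioi (by linarith),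
    mul_one, Real.exp_neg, Real.exp_log hn0]
  congr 1
  field_simp

-- At `n = 1` the two sides differ: `∫ 1 ^ (-s) ds = ∞`, while `1 / (1 * log 1) = 0` in Lean.
lemma lintegral_dirichletSeries (hf : f 1 = 0) :
    ∫⁻ s in Ioi (1 : ℝ), dirichletSeries f s =
      ∑' n, f n * ENNReal.ofReal (1 / (n * Real.log n)) := by
  unfold dirichletSeries
  rw [lintegral_tsum fun n => by fun_prop]
  congr 1 with n
  rw [lintegral_const_mul _ (by fun_prop)]
  match n with
  | 0 => simp
  | 1 => simp [hf]
  | n + 2 => rw [lintegral_ofReal_natCast_rpow_neg (by omega)]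

lemma lintegral_dirichletSeries_ne_top (hf : f 1 = 0) (hfin : dirichletSeries f 1 ≠ ⊤) :
    ∫⁻ s in Ioi (1 : ℝ), dirichletSeries f s ≠ ⊤ := by
  -- `1 / (n log n) ≤ n⁻¹ / log 2` for `n ≥ 2`
  refine ne_top_of_le_ne_top
    (ENNReal.mul_ne_top (ENNReal.ofReal_ne_top (r := 1 / Real.log 2)) hfin) ?_
  rw [lintegral_dirichletSeries hf, dirichletSeries, ← ENNReal.tsum_mul_left]
  refine ENNReal.tsum_le_tsum fun n => ?_
  match n with
  | 0 => simp
  | 1 => simp [hf]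
  | n + 2 =>
    have hlog : Real.log 2 ≤ Real.log (n + 2 : ℕ) :=
      Real.log_le_log two_pos (by push_cast; linarith)
    rw [mul_left_comm, Real.rpow_neg_one, ← ENNReal.ofReal_mul (by positivity)]
    gcongr
    rw [one_div, mul_inv, one_div, mul_comm]
    gcongr

lemma dirichletSeries_indicatorFn_image_sq {S : Set ℕ} (hS : 0 ∉ S) (s : ℝ) :
    dirichletSeries (indicatorFn ((· ^ 2) '' S)) s = dirichletSeries (indicatorFn S) (2 * s) := by
  have hS2 : 0 ∉ (· ^ 2) '' S := by
    rintro ⟨p, hp, hp0⟩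
    exact hS (pow_eq_zero_iff two_ne_zero |>.mp hp0 ▸ hp)
  rw [dirichletSeries, dirichletSeries, tsum_indicatorFn_mul hS2, tsum_indicatorFn_mul hS,
    tsum_image (fun n : ℕ => ENNReal.ofReal ((n : ℝ) ^ (-s)))
      (Nat.pow_left_injective two_ne_zero).injOn]
  congr 1 with p
  rw [Nat.cast_pow, ← Real.rpow_natCast, ← Real.rpow_mul p.1.cast_nonneg]
  ring_nf

end dirichletSeries

end ArithmeticFunction

lemma exists_dvd_cardFactors_eq {n j : ℕ} (hn : n ≠ 0) (hj : j ≤ Ω n) : ∃ e, e ∣ n ∧ Ω e = j := by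
  refine ⟨(n.primeFactorsList.take j).prod, ?_, ?_⟩
  · simpa [Nat.prod_primeFactorsList hn] using (n.primeFactorsList.take_sublist j).prod_dvd_prod
  · have hprime : ∀ q ∈ n.primeFactorsList.take j, q.Prime := fun q hq =>
      Nat.prime_of_mem_primeFactorsList (List.mem_of_mem_take hq)
    rw [cardFactors_apply, ← (Nat.primeFactorsList_unique rfl hprime).length_eq, List.length_take]
    exact min_eq_left hj

lemma filter_divisors_cardFactors_eq_one (n : ℕ) :
    {e ∈ n.divisors | Ω e = 1} = n.primeFactors := by
  simp only [cardFactors_eq_one_iff_prime, Nat.primeFactors_eq_to_filter_divisors_prime]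

lemma exists_dvd_cardFactors_eq_two {n : ℕ} (hn : 3 ≤ Ω n) :
    ∃ e, e ∣ n ∧ Ω e = 2 ∧ ∀ p, p ≠ n.minFac → e ≠ n.minFac * p := by
  have hn0 : n ≠ 0 := by rintro rfl; simp at hn
  set q := n.minFac
  have hq : q.Prime := Nat.minFac_prime (by rintro rfl; simp at hn)
  by_cases hsq : q * q ∣ n
  · exact ⟨_, hsq, by simp [cardFactors_mul hq.ne_zero hq.ne_zero, hq],
      fun p hp h => hp (Nat.eq_of_mul_eq_mul_left hq.pos h).symm⟩
  · obtain ⟨m, hm⟩ := n.minFac_dvd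
    have hm0 : m ≠ 0 := by rintro rfl; exact hn0 (by rw [hm, mul_zero])
    have hqm : ¬ q ∣ m := fun h => hsq (by rw [hm]; exact Nat.mul_dvd_mul_left q h)
    have hΩm : 2 ≤ Ω m := by
      rw [hm, cardFactors_mul hq.ne_zero hm0, cardFactors_apply_prime hq] at hn
      omega
    obtain ⟨e, hem, he⟩ := exists_dvd_cardFactors_eq hm0 hΩm
    refine ⟨e, hem.trans ⟨q, by rw [hm, mul_comm]⟩, he, ?_⟩
    rintro p - rfl
    exact hqm ((dvd_mul_right q p).trans hem)

lemma card_primeFactors_le_card_filter_divisors {n : ℕ} (hn : 3 ≤ Ω n) :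
    #n.primeFactors ≤ #{e ∈ n.divisors | Ω e = 2} := by
  have hn0 : n ≠ 0 := by rintro rfl; simp at hn
  set q := n.minFac
  have hq : q.Prime := Nat.minFac_prime (by rintro rfl; simp at hn)
  have hqn : q ∈ n.primeFactors := Nat.mem_primeFactors.mpr ⟨hq, n.minFac_dvd, hn0⟩
  obtain ⟨e₀, he₀n, he₀, he₀_notMem⟩ := exists_dvd_cardFactors_eq_two hn
  set T := (n.primeFactors.erase q).image (q * ·)
  have hT : #T = #(n.primeFactors.erase q) :=
    Finset.card_image_of_injective _ (mul_right_injective₀ hq.ne_zero)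
  have he₀T : e₀ ∉ T := by
    simp only [T, Finset.mem_image, Finset.mem_erase]
    rintro ⟨p, ⟨hpq, -⟩, rfl⟩
    exact he₀_notMem p hpq rfl
  have hsub : insert e₀ T ⊆ {e ∈ n.divisors | Ω e = 2} := by
    intro e he
    simp only [Finset.mem_insert, T, Finset.mem_image, Finset.mem_erase,
      Nat.mem_primeFactors] at he
    simp only [Finset.mem_filter, Nat.mem_divisors]
    rcases he with rfl | ⟨p, ⟨hpq, hp, hpn, -⟩, rfl⟩
    · exact ⟨⟨he₀n, hn0⟩, he₀⟩
    · refine ⟨⟨Nat.Coprime.mul_dvd_of_dvd_of_dvd ?_ n.minFac_dvd hpn, hn0⟩, ?_⟩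
      · exact (Nat.coprime_primes hq hp).mpr (Ne.symm hpq)
      · simp [cardFactors_mul hq.ne_zero hp.ne_zero, hq, hp]
  calc #n.primeFactors = #(n.primeFactors.erase q) + 1 := (Finset.card_erase_add_one hqn).symm
    _ = #(insert e₀ T) := by rw [Finset.card_insert_of_notMem he₀T, hT]
    _ ≤ _ := Finset.card_le_card hsub

local notation:max "χ[" P ", " k "]" => indicatorFn (NkSet P k)

local notation:max "𝒮[" P ", " k "]" => dirichletSeries (indicatorFn (NkSet P k))

section NkSet

variable {P : Set ℕ} {j l k n : ℕ}

lemma mem_NkSet_iff : n ∈ NkSet P k ↔ n ∈ NSet P ∧ Ω n = k := Iff.rfl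

lemma mem_NSet_of_dvd {d : ℕ} (hn : n ∈ NSet P) (hd : d ∣ n) : d ∈ NSet P :=
  ⟨Nat.pos_of_dvd_of_pos hd hn.1, fun p hp hpd => hn.2 p hp (hpd.trans hd)⟩

lemma mul_mem_NSet {a b : ℕ} (ha : a ∈ NSet P) (hb : b ∈ NSet P) : a * b ∈ NSet P :=
  ⟨Nat.mul_pos ha.1 hb.1, fun p hp hpd => (hp.dvd_mul.mp hpd).elim (ha.2 p hp) (hb.2 p hp)⟩

lemma mul_mem_NkSet {a b : ℕ} (ha : a ∈ NkSet P j) (hb : b ∈ NkSet P l) :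
    a * b ∈ NkSet P (j + l) := by
  rw [mem_NkSet_iff] at *
  exact ⟨mul_mem_NSet ha.1 hb.1, by rw [cardFactors_mul ha.1.1.ne' hb.1.1.ne', ha.2, hb.2]⟩

lemma zero_notMem_NkSet : 0 ∉ NkSet P k := fun h => h.1.1.false

lemma one_notMem_NkSet (hk : k ≠ 0) : 1 ∉ NkSet P k := fun h => hk (by simpa using h.2.symm)

lemma pow_mem_NkSet {p : ℕ} (hp : p.Prime) (hpP : p ∈ P) (k : ℕ) : p ^ k ∈ NkSet P k := by
  refine mem_NkSet_iff.mpr ⟨⟨pow_pos hp.pos k, fun q hq hqd => ?_⟩, cardFactors_apply_prime_pow hp⟩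
  rwa [(Nat.prime_dvd_prime_iff_eq hq hp).mp (hq.dvd_of_dvd_pow hqd)]

lemma NkSet_one (hP : ∀ p ∈ P, p.Prime) : NkSet P 1 = P := by
  ext n
  simp only [mem_NkSet_iff, cardFactors_eq_one_iff_prime]
  refine ⟨fun ⟨hn, hp⟩ => hn.2 n hp dvd_rfl, fun hn => ⟨?_, hP n hn⟩⟩
  simpa using pow_mem_NkSet (hP n hn) hn 1 |>.1

end NkSet

section Coefficients

variable {P : Set ℕ}

lemma indicatorFn_NkSet_mul_apply_of_mem {j l n : ℕ} (hn : n ∈ NkSet P (j + l)) :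
    (χ[P, j] * χ[P, l]) n = #{e ∈ n.divisors | Ω e = l} := by
  rw [mul_apply, Nat.sum_divisorsAntidiagonal' fun d e => χ[P, j] d * χ[P, l] e,
    Finset.natCast_card_filter]
  refine Finset.sum_congr rfl fun e he => ?_
  have hen : e ∣ n := Nat.dvd_of_mem_divisors he
  have he0 : e ≠ 0 := ne_zero_of_dvd_ne_zero hn.1.1.ne' hen
  have hd0 : n / e ≠ 0 := (Nat.div_pos (Nat.le_of_dvd hn.1.1 hen) (Nat.pos_of_ne_zero he0)).ne'
  have hΩ : Ω (n / e) + Ω e = j + l := by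
    rw [← cardFactors_mul hd0 he0, Nat.div_mul_cancel hen]
    exact hn.2
  split_ifs with hel
  · rw [indicatorFn_apply_of_mem (S := NkSet P j)
        (mem_NkSet_iff.mpr ⟨mem_NSet_of_dvd hn.1 (Nat.div_dvd_of_dvd hen), by omega⟩) hd0,
      indicatorFn_apply_of_mem (mem_NkSet_iff.mpr ⟨mem_NSet_of_dvd hn.1 hen, hel⟩) he0, one_mul]
  · rw [indicatorFn_apply_of_notMem (S := NkSet P l) fun h => hel h.2, mul_zero]

lemma indicatorFn_NkSet_mul_apply_of_notMem {j l n : ℕ} (hn : n ∉ NkSet P (j + l)) :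
    (χ[P, j] * χ[P, l]) n = 0 := by
  rw [mul_apply]
  refine Finset.sum_eq_zero fun ⟨d, e⟩ hde => ?_
  have hde : d * e = n := (Nat.mem_divisorsAntidiagonal.mp hde).1
  by_cases hd : d ∈ NkSet P j
  · by_cases he : e ∈ NkSet P l
    · exact absurd (hde ▸ mul_mem_NkSet hd he) hn
    · rw [indicatorFn_apply_of_notMem he, mul_zero]
  · rw [indicatorFn_apply_of_notMem hd, zero_mul]

lemma indicatorFn_NkSet_succ_le_mul_one (k n : ℕ) : χ[P, k + 1] n ≤ (χ[P, k] * χ[P, 1]) n := by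
  by_cases hn : n ∈ NkSet P (k + 1)
  · have hn1 : 1 < n := cardFactors_pos_iff_one_lt.mp (by rw [(mem_NkSet_iff.mp hn).2]; omega)
    rw [indicatorFn_NkSet_mul_apply_of_mem hn, indicatorFn_apply_of_mem hn hn.1.1.ne',
      filter_divisors_cardFactors_eq_one, Nat.one_le_cast]
    exact Finset.card_pos.mpr (Nat.nonempty_primeFactors.mpr hn1)
  · rw [indicatorFn_apply_of_notMem hn]
    exact zero_le

lemma indicatorFn_NkSet_succ_mul_one_le {k : ℕ} (hk : 1 ≤ k) (n : ℕ) :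
    (χ[P, k + 1] * χ[P, 1]) n ≤ (χ[P, k] * χ[P, 2]) n := by
  by_cases hn : n ∈ NkSet P (k + 2)
  · rw [indicatorFn_NkSet_mul_apply_of_mem (j := k + 1) (l := 1) hn,
      indicatorFn_NkSet_mul_apply_of_mem (j := k) (l := 2) hn,
      filter_divisors_cardFactors_eq_one, Nat.cast_le]
    exact card_primeFactors_le_card_filter_divisors (by rw [(mem_NkSet_iff.mp hn).2]; omega)
  · rw [indicatorFn_NkSet_mul_apply_of_notMem (j := k + 1) (l := 1) hn]
    exact zero_le

lemma two_mul_indicatorFn_NkSet_two_le (n : ℕ) :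
    2 * χ[P, 2] n ≤ (χ[P, 1] * χ[P, 1]) n + indicatorFn ((· ^ 2) '' NkSet P 1) n := by
  by_cases hn : n ∈ NkSet P 2
  swap
  · simp [indicatorFn_apply_of_notMem hn]
  rw [indicatorFn_NkSet_mul_apply_of_mem (j := 1) hn, filter_divisors_cardFactors_eq_one,
    indicatorFn_apply_of_mem hn hn.1.1.ne', mul_one]
  have hn1 : 1 < n := cardFactors_pos_iff_one_lt.mp (by rw [(mem_NkSet_iff.mp hn).2]; omega)
  rcases lt_or_ge 1 #n.primeFactors with h2 | h1
  · calc (2 : ℝ≥0∞) ≤ #n.primeFactors := by exact_mod_cast h2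
      _ ≤ _ := le_self_add
  · have hpow : IsPrimePow n := isPrimePow_iff_card_primeFactors_eq_one.mpr
      (le_antisymm h1 (Finset.card_pos.mpr (Nat.nonempty_primeFactors.mpr hn1)))
    obtain ⟨p, a, hp, -, rfl⟩ := (isPrimePow_nat_iff n).mp hpow
    obtain rfl : a = 2 := by simpa [hp] using (mem_NkSet_iff.mp hn).2
    have hpP : p ∈ NkSet P 1 := by
      simpa using pow_mem_NkSet hp (hn.1.2 p hp (dvd_pow_self p two_ne_zero)) 1
    rw [indicatorFn_apply_of_mem (mem_image_of_mem (· ^ 2) hpP) hn.1.1.ne',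
      Nat.primeFactors_prime_pow two_ne_zero hp]
    norm_num

end Coefficients

lemma mul_self_add_lt_two_mul {x y a b : ℝ} (hy : 0 ≤ y) (hyx : y < x) (hyb : y ≤ b)
    (hxa : x < a) (hab : a ≤ 1 + √(1 - b)) : x * x + y < 2 * x := by
  rcases le_or_gt x 1 with hx1 | hx1
  · nlinarith
  · have hsqrt : x - 1 < √(1 - b) := by linarith
    have hb : 0 < 1 - b := Real.sqrt_pos.mp ((sub_pos.mpr hx1).trans hsqrt)
    have := mul_self_lt_mul_self (sub_pos.mpr hx1).le hsqrt
    rw [Real.mul_self_sqrt hb.le] at this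
    linarith

section PrimeSums

variable {P : Set ℕ} (hP : ∀ p ∈ P, p.Prime)
include hP

lemma summable_rpow_neg_of_le {u t : ℝ} (hu : Summable fun p : P => (p : ℝ) ^ (-u))
    (hut : u ≤ t) : Summable fun p : P => (p : ℝ) ^ (-t) :=
  hu.of_nonneg_of_le (fun _ => by positivity) fun p =>
    Real.rpow_le_rpow_of_exponent_le (by exact_mod_cast (hP p p.2).one_le) (by linarith)

lemma tsum_rpow_neg_le_of_le {u t : ℝ} (hu : Summable fun p : P => (p : ℝ) ^ (-u))
    (hut : u ≤ t) : ∑' p : P, (p : ℝ) ^ (-t) ≤ ∑' p : P, (p : ℝ) ^ (-u) :=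
  (summable_rpow_neg_of_le hP hu hut).tsum_le_tsum (fun p =>
    Real.rpow_le_rpow_of_exponent_le (by exact_mod_cast (hP p p.2).one_le) (by linarith)) hu

lemma tsum_rpow_neg_lt_of_lt (hne : P.Nonempty) {u t : ℝ}
    (hu : Summable fun p : P => (p : ℝ) ^ (-u)) (hut : u < t) :
    ∑' p : P, (p : ℝ) ^ (-t) < ∑' p : P, (p : ℝ) ^ (-u) := by
  obtain ⟨p, hp⟩ := hne
  refine (summable_rpow_neg_of_le hP hu hut.le).tsum_lt_tsum (i := ⟨p, hp⟩) (fun q =>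
    Real.rpow_le_rpow_of_exponent_le (by exact_mod_cast (hP q q.2).one_le) (by linarith)) ?_ hu
  exact Real.rpow_lt_rpow_of_exponent_lt (by exact_mod_cast (hP p hp).one_lt) (by linarith)

lemma dirichletSeries_NkSet_one {s : ℝ} (hs : Summable fun p : P => (p : ℝ) ^ (-s)) :
    𝒮[P, 1] s = ENNReal.ofReal (∑' p : P, (p : ℝ) ^ (-s)) := by
  rw [ENNReal.ofReal_tsum_of_nonneg (fun _ => by positivity) hs, dirichletSeries,
    tsum_indicatorFn_mul zero_notMem_NkSet, NkSet_one hP]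

lemma dirichletSeries_NkSet_one_mul_self_add_lt (hne : P.Nonempty)
    (h1 : Summable fun p : P => (p : ℝ) ^ (-1 : ℝ))
    (hineq : ∑' p : P, (p : ℝ) ^ (-1 : ℝ) ≤ 1 + √(1 - ∑' p : P, (p : ℝ) ^ (-2 : ℝ)))
    {s : ℝ} (hs : 1 < s) :
    𝒮[P, 1] s * 𝒮[P, 1] s + 𝒮[P, 1] (2 * s) < 2 * 𝒮[P, 1] s := by
  have hsum_s := summable_rpow_neg_of_le hP h1 hs.le
  have hsum_2s := summable_rpow_neg_of_le hP h1 (by linarith : 1 ≤ 2 * s)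
  rw [dirichletSeries_NkSet_one hP hsum_s, dirichletSeries_NkSet_one hP hsum_2s,
    ← ENNReal.ofReal_mul (by positivity), ← ENNReal.ofReal_add (by positivity) (by positivity),
    ← ENNReal.ofReal_ofNat 2, ← ENNReal.ofReal_mul zero_le_two,
    ENNReal.ofReal_lt_ofReal_iff_of_nonneg (by positivity)]
  exact mul_self_add_lt_two_mul (by positivity)
    (tsum_rpow_neg_lt_of_lt hP hne hsum_s (by linarith))
    (tsum_rpow_neg_le_of_le hP (summable_rpow_neg_of_le hP h1 one_le_two) (by linarith))
    (tsum_rpow_neg_lt_of_lt hP hne h1 hs) hineq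

end PrimeSums

section NkSeries

variable {P : Set ℕ}

lemma dirichletSeries_NkSet_succ_mul_one_le {k : ℕ} (hk : 1 ≤ k) (s : ℝ) :
    𝒮[P, k + 1] s * 𝒮[P, 1] s ≤ 𝒮[P, k] s * 𝒮[P, 2] s := by
  rw [← dirichletSeries_mul, ← dirichletSeries_mul]
  exact dirichletSeries_mono (indicatorFn_NkSet_succ_mul_one_le hk) s

lemma two_mul_dirichletSeries_NkSet_two_le (s : ℝ) :
    2 * 𝒮[P, 2] s ≤ 𝒮[P, 1] s * 𝒮[P, 1] s + 𝒮[P, 1] (2 * s) := by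
  rw [← dirichletSeries_mul, ← dirichletSeries_indicatorFn_image_sq zero_notMem_NkSet,
    ← dirichletSeries_add]
  exact const_mul_dirichletSeries_le two_mul_indicatorFn_NkSet_two_le s

lemma dirichletSeries_NkSet_le_pow {k : ℕ} (hk : 1 ≤ k) (s : ℝ) : 𝒮[P, k] s ≤ 𝒮[P, 1] s ^ k := by
  induction k, hk using Nat.le_induction with
  | base => rw [pow_one]
  | succ k _ ih =>
    calc 𝒮[P, k + 1] s ≤ 𝒮[P, k] s * 𝒮[P, 1] s := by
          rw [← dirichletSeries_mul]
          exact dirichletSeries_mono (indicatorFn_NkSet_succ_le_mul_one k) s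
      _ ≤ 𝒮[P, 1] s ^ (k + 1) := by
          rw [pow_succ]
          gcongr

variable (hP : ∀ p ∈ P, p.Prime)
include hP

lemma dirichletSeries_NkSet_pos (hne : P.Nonempty) (k : ℕ) (s : ℝ) : 0 < 𝒮[P, k] s := by
  obtain ⟨p, hp⟩ := hne
  have hpk : 0 < p ^ k := pow_pos (hP p hp).pos k
  refine lt_of_lt_of_le ?_ (ENNReal.le_tsum (p ^ k))
  rw [indicatorFn_apply_of_mem (pow_mem_NkSet (hP p hp) hp k) hpk.ne', one_mul,
    ENNReal.ofReal_pos]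
  exact Real.rpow_pos_of_pos (by exact_mod_cast hpk) _

lemma dirichletSeries_NkSet_ne_top (h1 : Summable fun p : P => (p : ℝ) ^ (-1 : ℝ)) {k : ℕ}
    (hk : 1 ≤ k) {s : ℝ} (hs : 1 ≤ s) : 𝒮[P, k] s ≠ ⊤ := by
  refine ne_top_of_le_ne_top (ENNReal.pow_ne_top ?_) (dirichletSeries_NkSet_le_pow hk s)
  rw [dirichletSeries_NkSet_one hP (summable_rpow_neg_of_le hP h1 hs)]
  exact ENNReal.ofReal_ne_top

lemma dirichletSeries_NkSet_succ_lt (hne : P.Nonempty)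
    (h1 : Summable fun p : P => (p : ℝ) ^ (-1 : ℝ))
    (hineq : ∑' p : P, (p : ℝ) ^ (-1 : ℝ) ≤ 1 + √(1 - ∑' p : P, (p : ℝ) ^ (-2 : ℝ)))
    {k : ℕ} (hk : 1 ≤ k) {s : ℝ} (hs : 1 < s) : 𝒮[P, k + 1] s < 𝒮[P, k] s := by
  have h21 : 𝒮[P, 2] s < 𝒮[P, 1] s :=
    (ENNReal.mul_lt_mul_iff_right two_ne_zero ENNReal.ofNat_ne_top).mp
      ((two_mul_dirichletSeries_NkSet_two_le s).trans_lt
        (dirichletSeries_NkSet_one_mul_self_add_lt hP hne h1 hineq hs))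
  refine (ENNReal.mul_lt_mul_iff_left (dirichletSeries_NkSet_pos hP hne 1 s).ne'
    (dirichletSeries_NkSet_ne_top hP h1 le_rfl hs.le)).mp ?_
  exact (dirichletSeries_NkSet_succ_mul_one_le hk s).trans_lt
    ((ENNReal.mul_lt_mul_iff_right (dirichletSeries_NkSet_pos hP hne k s).ne'
      (dirichletSeries_NkSet_ne_top hP h1 hk hs.le)).mpr h21)

end NkSeries

lemma tsum_NkSet_one_div_mul_log {P : Set ℕ} {k : ℕ} (hk : k ≠ 0) :
    ∑' n : NkSet P k, 1 / ((n : ℝ) * Real.log n) =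
      (∫⁻ s in Ioi (1 : ℝ), 𝒮[P, k] s).toReal := by
  rw [lintegral_dirichletSeries (indicatorFn_apply_of_notMem (one_notMem_NkSet hk)),
    tsum_indicatorFn_mul zero_notMem_NkSet, ENNReal.tsum_toReal_eq fun _ => ENNReal.ofReal_ne_top]
  congr 1 with n
  rw [ENNReal.toReal_ofReal]
  have := Real.log_natCast_nonneg n
  positivity

/-- The chain of strict inequalities (13) of Banks–Martin: if `P` is a nonempty set of
primes with `∑_{p∈P} p⁻¹ ≤ 1 + (1 - ∑_{p∈P} p⁻²)^{1/2}`, then for every `k ≥ 1`,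
`∑_{n∈ℕ_k(P)} 1/(n log n) > ∑_{n∈ℕ_{k+1}(P)} 1/(n log n)`. -/
theorem chain_of_strict_inequalities (P : Set ℕ) (hP : ∀ p ∈ P, Nat.Prime p)
    (hne : P.Nonempty)
    (hsummable : Summable fun p : P => (1 : ℝ) / (p : ℝ))
    (hineq : ∑' p : P, (1 : ℝ) / (p : ℝ) ≤
      1 + Real.sqrt (1 - ∑' p : P, (1 : ℝ) / ((p : ℝ) ^ 2)))
    (k : ℕ) (hk : 1 ≤ k) :
    ∑' n : NkSet P (k + 1), 1 / ((n : ℝ) * Real.log n) <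
      ∑' n : NkSet P k, 1 / ((n : ℝ) * Real.log n) := by
  have h1 : Summable fun p : P => (p : ℝ) ^ (-1 : ℝ) := by
    simpa only [Real.rpow_neg_one, one_div] using hsummable
  have hineq' : ∑' p : P, (p : ℝ) ^ (-1 : ℝ) ≤ 1 + √(1 - ∑' p : P, (p : ℝ) ^ (-2 : ℝ)) := by
    simpa only [Real.rpow_neg_one, Real.rpow_neg_ofNat, zpow_neg, zpow_ofNat, one_div] using hineq
  have hfin : ∀ j, 1 ≤ j → ∫⁻ s in Ioi (1 : ℝ), 𝒮[P, j] s ≠ ⊤ := fun j hj =>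
    lintegral_dirichletSeries_ne_top (indicatorFn_apply_of_notMem (one_notMem_NkSet (by omega)))
      (dirichletSeries_NkSet_ne_top hP h1 hj le_rfl)
  rw [tsum_NkSet_one_div_mul_log (by omega), tsum_NkSet_one_div_mul_log (by omega)]
  refine ENNReal.toReal_strict_mono (hfin k hk) ?_
  exact setLIntegral_strict_mono measurableSet_Ioi (by simp) (measurable_dirichletSeries _)
    (hfin (k + 1) (by omega)) (ae_of_all _ fun s hs =>
      dirichletSeries_NkSet_succ_lt hP hne h1 hineq' hk hs)
end

section
/- Let t > 1 be a real number and let 𝒫 be an infinite set of primes satisfying ∑_{p∈𝒫} p^{−t} ≤ 1 + (1 − ∑_{p∈𝒫} p^{−2t})^{1/2}. Suppose that every finite set of primes 𝒬 satisfying ∑_{p∈𝒬} p^{−t} ≤ 1 + (1 − ∑_{p∈𝒬} p^{−2t})^{1/2} is t-best among primitive subsets of ℕ(𝒬). Then 𝒫 is t-best among primitive subsets of ℕ(𝒫): for every primitive set 𝒮 ⊆ ℕ(𝒫), ∑_{n∈𝒮} n^{−t} ≤ ∑_{p∈𝒫} p^{−t}. -/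
/-- The reduction to the finite case (Banks–Martin, Section 2): let `t > 1` and let `P`
be an infinite set of primes with `∑_{p∈P} p^{-t} ≤ 1 + (1 - ∑_{p∈P} p^{-2t})^{1/2}`.
If every finite set of primes satisfying the analogous inequality is `t`-best among
primitive subsets of its generated semigroup, then `P` is `t`-best among primitive
subsets of `ℕ(P)`. -/
theorem infinite_case_from_finite (t : ℝ) (ht : 1 < t) (P : Set ℕ)
    (hP : ∀ p ∈ P, Nat.Prime p) (hinf : P.Infinite)
    (hineq : ∑' p : P, (p : ℝ) ^ (-t) ≤
      1 + Real.sqrt (1 - ∑' p : P, (p : ℝ) ^ (-(2 * t))))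
    (hfinite : ∀ Q : Finset ℕ, (∀ p ∈ Q, Nat.Prime p) →
      (∑ p ∈ Q, (p : ℝ) ^ (-t) ≤
        1 + Real.sqrt (1 - ∑ p ∈ Q, (p : ℝ) ^ (-(2 * t)))) →
      ∀ S : Set ℕ, S ⊆ NSet ↑Q → Primitive S →
        ∑' n : S, (n : ℝ) ^ (-t) ≤ ∑ p ∈ Q, (p : ℝ) ^ (-t))
    (S : Set ℕ) (hS : S ⊆ NSet P) (hprim : Primitive S) :
    ∑' n : S, (n : ℝ) ^ (-t) ≤ ∑' p : P, (p : ℝ) ^ (-t) := by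
  have hsum1 : Summable (fun n : ℕ => (n : ℝ) ^ (-t)) :=
    Real.summable_nat_rpow.2 (by linarith)
  have hsum2 : Summable (fun n : ℕ => (n : ℝ) ^ (-(2 * t))) :=
    Real.summable_nat_rpow.2 (by linarith)
  have hnn : ∀ n : ℕ, 0 ≤ (n : ℝ) ^ (-t) := fun n => Real.rpow_nonneg (Nat.cast_nonneg n) _
  have hnn2 : ∀ n : ℕ, 0 ≤ (n : ℝ) ^ (-(2 * t)) := fun n => Real.rpow_nonneg (Nat.cast_nonneg n) _
  -- finset sums over subsets of P are bounded by the tsum over P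
  have key : ∀ (f : ℕ → ℝ), (∀ n, 0 ≤ f n) → Summable f → ∀ Q : Finset ℕ,
      (↑Q : Set ℕ) ⊆ P → ∑ p ∈ Q, f p ≤ ∑' p : P, f p := by
    intro f hf hsf Q hQP
    rw [tsum_subtype]
    have : ∑ p ∈ Q, f p = ∑ p ∈ Q, P.indicator f p := by
      apply Finset.sum_congr rfl
      intro p hp
      rw [Set.indicator_of_mem (hQP hp)]
    rw [this]
    exact Summable.sum_le_tsum Q (fun i _ => Set.indicator_nonneg (fun n _ => hf n) i)
      (hsf.indicator P)
  have hRnn : 0 ≤ ∑' p : P, (p : ℝ) ^ (-t) :=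
    tsum_nonneg (fun p => hnn p)
  have h1S : (1 : ℕ) ∉ S := by
    intro h1
    obtain ⟨hne, hne1, hdvd⟩ := hprim
    have hb : ∃ b ∈ S, b ≠ 1 := by
      by_contra h
      push_neg at h
      exact hne1 (Set.eq_singleton_iff_unique_mem.2 ⟨h1, h⟩)
    obtain ⟨b, hbS, hb1⟩ := hb
    exact hb1 ((hdvd 1 h1 b hbS (one_dvd b)).symm)
  have hsumS : Summable (fun n : S => ((n : ℕ) : ℝ) ^ (-t)) := hsum1.subtype S
  apply Summable.tsum_le_of_sum_le hsumS
  intro F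
  classical
  set G : Finset ℕ := F.image Subtype.val with hG
  have hsum_eq : ∑ n ∈ G, (n : ℝ) ^ (-t) = ∑ i ∈ F, ((i : ℕ) : ℝ) ^ (-t) := by
    apply Finset.sum_image
    intro x _ y _ h
    exact Subtype.ext h
  rw [← hsum_eq]
  have hGS : ∀ n ∈ G, n ∈ S := by
    intro n hn
    simp only [hG, Finset.mem_image] at hn
    obtain ⟨i, _, rfl⟩ := hn
    exact i.2
  rcases G.eq_empty_or_nonempty with hGe | hGne
  · rw [hGe]; simpa using hRnn
  · set Q : Finset ℕ := G.biUnion (fun n => n.primeFactors) with hQ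
    have hQprime : ∀ p ∈ Q, Nat.Prime p := by
      intro p hp
      simp only [hQ, Finset.mem_biUnion] at hp
      obtain ⟨n, _, hpn⟩ := hp
      exact Nat.prime_of_mem_primeFactors hpn
    have hQP : (↑Q : Set ℕ) ⊆ P := by
      intro p hp
      simp only [Finset.coe_biUnion, Set.mem_iUnion, Finset.mem_coe, hQ] at hp
      obtain ⟨n, hnG, hpn⟩ := hp
      exact (hS (hGS n hnG)).2 p (Nat.prime_of_mem_primeFactors hpn)
        (Nat.dvd_of_mem_primeFactors hpn)
    have hQt : ∑ p ∈ Q, (p : ℝ) ^ (-t) ≤ ∑' p : P, (p : ℝ) ^ (-t) :=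
      key _ hnn hsum1 Q hQP
    have hQ2t : ∑ p ∈ Q, (p : ℝ) ^ (-(2 * t)) ≤ ∑' p : P, (p : ℝ) ^ (-(2 * t)) :=
      key _ hnn2 hsum2 Q hQP
    have hineqQ : ∑ p ∈ Q, (p : ℝ) ^ (-t) ≤
        1 + Real.sqrt (1 - ∑ p ∈ Q, (p : ℝ) ^ (-(2 * t))) := by
      calc ∑ p ∈ Q, (p : ℝ) ^ (-t) ≤ ∑' p : P, (p : ℝ) ^ (-t) := hQt
        _ ≤ 1 + Real.sqrt (1 - ∑' p : P, (p : ℝ) ^ (-(2 * t))) := hineq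
        _ ≤ 1 + Real.sqrt (1 - ∑ p ∈ Q, (p : ℝ) ^ (-(2 * t))) := by
            have := Real.sqrt_le_sqrt (show 1 - ∑' p : P, (p : ℝ) ^ (-(2 * t)) ≤
              1 - ∑ p ∈ Q, (p : ℝ) ^ (-(2 * t)) by linarith)
            linarith
    have hGN : (↑G : Set ℕ) ⊆ {n : ℕ | 0 < n ∧ ∀ p : ℕ, p.Prime → p ∣ n → p ∈ (↑Q : Set ℕ)} := by
      intro n hn
      have hn' := hGS n hn
      refine ⟨(hS hn').1, fun p hp hpn => ?_⟩
      simp only [hQ, Finset.coe_biUnion, Set.mem_iUnion, Finset.mem_coe]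
      exact ⟨n, hn, Nat.mem_primeFactors.2 ⟨hp, hpn, (hS hn').1.ne'⟩⟩
    have hGprim : (↑G : Set ℕ).Nonempty ∧ (↑G : Set ℕ) ≠ {1} ∧
        ∀ a ∈ (↑G : Set ℕ), ∀ b ∈ (↑G : Set ℕ), a ∣ b → a = b := by
      refine ⟨Finset.coe_nonempty.2 hGne, ?_, fun a ha b hb hab => hprim.2.2 a (hGS a ha) b (hGS b hb) hab⟩
      intro h
      have : (1 : ℕ) ∈ (↑G : Set ℕ) := h ▸ rfl
      exact h1S (hGS 1 this)
    calc ∑ n ∈ G, (n : ℝ) ^ (-t)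
        = ∑' n : (↑G : Set ℕ), ((n : ℕ) : ℝ) ^ (-t) := (G.tsum_subtype _).symm
      _ ≤ ∑ p ∈ Q, (p : ℝ) ^ (-t) := hfinite Q hQprime hineqQ _ hGN hGprim
      _ ≤ ∑' p : P, (p : ℝ) ^ (-t) := hQt
end
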